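/- Every solution of the unilateral (one-sided) spring oscillator m·u''(t) + k·u(t) + k_r·max(u(t),0) = 0, with m > 0, k > 0, k_r > 0, that is not identically zero is periodic, and its minimal period is T = π·√(m/k) + π·√(m/(k+k_r)); in particular the period is independent of the amplitude of the solution. -/

import Mathlib

/-!
The state `(u, u')` solves a first-order system with Lipschitz right-hand side, so it is determined
by its value at any one time; in particular a nonzero solution never passes through `(0, 0)`. It
must vanish somewhere, since a solution of constant sign is a sinusoid on all of `ℝ`. Hence it
passes through a state `(0, c)` with `c > 0`. With `ω₁² = k / m` and `ω₂² = (k + kr) / m`, from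
there it follows the contact half-sine `c / ω₂ · sin (ω₂ t)` for a time `π / ω₂`, reaching
`(0, -c)`, then the free half-sine for a time `π / ω₁`, returning to `(0, c)`. Before that, `u` is
positive, then at state `(0, -c)`, then negative, so no shorter time brings back the state `(0, c)`.
-/

open Real Set
open scoped NNReal

section SecondOrderODE

variable {φ : ℝ → ℝ} {K : ℝ≥0} {u u' v v' : ℝ → ℝ} {ω a b : ℝ}

theorem eqOn_Icc_of_second_order_ode (hφ : LipschitzWith K φ)
    (hu : ∀ t ∈ Icc a b, HasDerivAt u (u' t) t) (hu' : ∀ t ∈ Icc a b, HasDerivAt u' (φ (u t)) t)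
    (hv : ∀ t ∈ Icc a b, HasDerivAt v (v' t) t) (hv' : ∀ t ∈ Icc a b, HasDerivAt v' (φ (v t)) t)
    (h₀ : u a = v a) (h₁ : u' a = v' a) :
    EqOn u v (Icc a b) ∧ EqOn u' v' (Icc a b) := by
  have hu₂ : ∀ t ∈ Icc a b, HasDerivAt (fun s => (u s, u' s)) (u' t, φ (u t)) t :=
    fun t ht => (hu t ht).prodMk (hu' t ht)
  have hv₂ : ∀ t ∈ Icc a b, HasDerivAt (fun s => (v s, v' s)) (v' t, φ (v t)) t :=
    fun t ht => (hv t ht).prodMk (hv' t ht)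
  have h := ODE_solution_unique (v := fun _ p => (p.2, φ p.1))
    (fun _ => LipschitzWith.prod_snd.prodMk (hφ.comp LipschitzWith.prod_fst))
    (HasDerivAt.continuousOn hu₂) (fun t ht => (hu₂ t (Ico_subset_Icc_self ht)).hasDerivWithinAt)
    (HasDerivAt.continuousOn hv₂) (fun t ht => (hv₂ t (Ico_subset_Icc_self ht)).hasDerivWithinAt)
    (Prod.ext h₀ h₁)
  exact ⟨fun t ht => congrArg Prod.fst (h ht), fun t ht => congrArg Prod.snd (h ht)⟩

theorem eq_of_second_order_ode (hφ : LipschitzWith K φ)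
    (hu : ∀ t, HasDerivAt u (u' t) t) (hu' : ∀ t, HasDerivAt u' (φ (u t)) t)
    (hv : ∀ t, HasDerivAt v (v' t) t) (hv' : ∀ t, HasDerivAt v' (φ (v t)) t)
    {t₀ : ℝ} (h₀ : u t₀ = v t₀) (h₁ : u' t₀ = v' t₀) : u = v := by
  have h := ODE_solution_unique_univ (v := fun _ p => (p.2, φ p.1)) (s := fun _ => univ)
    (fun _ => (LipschitzWith.prod_snd.prodMk (hφ.comp LipschitzWith.prod_fst)).lipschitzOnWith)
    (fun t => ⟨(hu t).prodMk (hu' t), trivial⟩) (fun t => ⟨(hv t).prodMk (hv' t), trivial⟩)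
    (Prod.ext h₀ h₁)
  exact funext fun t => congrArg Prod.fst (congrFun h t)

noncomputable def sinusoid (ω A B a t : ℝ) : ℝ :=
  A * cos (ω * (t - a)) + B / ω * sin (ω * (t - a))

@[simp]
theorem sinusoid_self (ω A B a : ℝ) : sinusoid ω A B a a = A := by
  simp [sinusoid]

theorem sinusoid_add_pi_div (hω : ω ≠ 0) (A B a : ℝ) : sinusoid ω A B a (a + π / ω) = -A := by
  simp [sinusoid, mul_div_cancel₀ _ hω]

theorem hasDerivAt_sinusoid (hω : ω ≠ 0) (A B a t : ℝ) :
    HasDerivAt (sinusoid ω A B a) (sinusoid ω B (-ω ^ 2 * A) a t) t := by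
  have hθ : HasDerivAt (fun s => ω * (s - a)) ω t := by
    simpa using ((hasDerivAt_id t).sub_const a).const_mul ω
  refine (((hasDerivAt_cos _).comp t hθ).const_mul A).add
    (((hasDerivAt_sin _).comp t hθ).const_mul (B / ω)) |>.congr_deriv ?_
  simp only [sinusoid]
  field_simp
  ring

theorem hasDerivAt_sinusoid_deriv (hω : ω ≠ 0) (A B a t : ℝ) :
    HasDerivAt (sinusoid ω B (-ω ^ 2 * A) a) (-ω ^ 2 * sinusoid ω A B a t) t :=
  (hasDerivAt_sinusoid hω _ _ a t).congr_deriv (by simp only [sinusoid]; field_simp; ring)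

theorem mul_sinusoid_zero_eq (ω B a t : ℝ) :
    B * sinusoid ω 0 B a t = B ^ 2 / ω * sin (ω * (t - a)) := by
  simp only [sinusoid]
  ring

theorem mul_sinusoid_zero_nonneg (hω : 0 < ω) (B : ℝ) {t : ℝ} (ht : t ∈ Icc a (a + π / ω)) :
    0 ≤ B * sinusoid ω 0 B a t := by
  have h₁ : 0 ≤ ω * (t - a) := mul_nonneg hω.le (by linarith [ht.1])
  have h₂ : ω * (t - a) ≤ π := by
    rw [mul_comm, ← le_div_iff₀ hω]
    linarith [ht.2]
  rw [mul_sinusoid_zero_eq]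
  exact mul_nonneg (by positivity) (sin_nonneg_of_nonneg_of_le_pi h₁ h₂)

theorem mul_sinusoid_zero_pos (hω : 0 < ω) {B : ℝ} (hB : B ≠ 0) {t : ℝ}
    (ht : t ∈ Ioo a (a + π / ω)) : 0 < B * sinusoid ω 0 B a t := by
  have h₁ : 0 < ω * (t - a) := mul_pos hω (by linarith [ht.1])
  have h₂ : ω * (t - a) < π := by
    rw [mul_comm, ← lt_div_iff₀ hω]
    linarith [ht.2]
  rw [mul_sinusoid_zero_eq]
  exact mul_pos (by positivity) (sin_pos_of_pos_of_lt_pi h₁ h₂)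

theorem eqOn_sinusoid_of_second_order_ode (hφ : LipschitzWith K φ) (hω : ω ≠ 0)
    (hu : ∀ t ∈ Icc a b, HasDerivAt u (u' t) t) (hu' : ∀ t ∈ Icc a b, HasDerivAt u' (φ (u t)) t)
    (hφω : ∀ t ∈ Icc a b,
      φ (sinusoid ω (u a) (u' a) a t) = -ω ^ 2 * sinusoid ω (u a) (u' a) a t) :
    EqOn u (sinusoid ω (u a) (u' a) a) (Icc a b) ∧
      EqOn u' (sinusoid ω (u' a) (-ω ^ 2 * u a) a) (Icc a b) :=
  eqOn_Icc_of_second_order_ode hφ hu hu' (fun t _ => hasDerivAt_sinusoid hω _ _ a t)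
    (fun t ht => hφω t ht ▸ hasDerivAt_sinusoid_deriv hω _ _ a t) (sinusoid_self ..).symm
    (sinusoid_self ..).symm

theorem exists_zero_of_harmonic (hω : 0 < ω) (hu : ∀ t, HasDerivAt u (u' t) t)
    (hu' : ∀ t, HasDerivAt u' (-ω ^ 2 * u t) t) : ∃ t, u t = 0 := by
  have hφ : LipschitzWith _ fun x : ℝ => -ω ^ 2 * x := lipschitzWith_smul (-ω ^ 2)
  have hend : u (0 + π / ω) = -u 0 := by
    have hmem : 0 + π / ω ∈ Icc 0 (0 + π / ω) := ⟨by positivity, le_rfl⟩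
    rw [(eqOn_sinusoid_of_second_order_ode hφ hω.ne' (fun t _ => hu t) (fun t _ => hu' t)
      (fun _ _ => rfl)).1 hmem, sinusoid_add_pi_div hω.ne']
  have hcont : Continuous u := continuous_iff_continuousAt.2 fun t => (hu t).continuousAt
  rcases le_total 0 (u 0) with h | h
  · exact intermediate_value_univ (0 + π / ω) 0 hcont ⟨by linarith, h⟩
  · exact intermediate_value_univ 0 (0 + π / ω) hcont ⟨h, by linarith⟩

theorem half_oscillation_of_second_order_ode (hφ : LipschitzWith K φ) (hω : 0 < ω)
    (hu : ∀ t, HasDerivAt u (u' t) t) (hu' : ∀ t, HasDerivAt u' (φ (u t)) t)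
    (hφω : ∀ x, 0 ≤ u' a * x → φ x = -ω ^ 2 * x) (h₀ : u a = 0) (h₁ : u' a ≠ 0) :
    (∀ t ∈ Ioo a (a + π / ω), 0 < u' a * u t) ∧ u (a + π / ω) = 0 ∧
      u' (a + π / ω) = -u' a := by
  obtain ⟨hu_eq, hu'_eq⟩ := eqOn_sinusoid_of_second_order_ode (b := a + π / ω) hφ hω.ne'
    (fun t _ => hu t) (fun t _ => hu' t)
    (fun t ht => hφω _ (by rw [h₀]; exact mul_sinusoid_zero_nonneg hω _ ht))
  have hend : a + π / ω ∈ Icc a (a + π / ω) := ⟨by have := div_pos pi_pos hω; linarith, le_rfl⟩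
  refine ⟨fun t ht => ?_, ?_, ?_⟩
  · rw [hu_eq (Ioo_subset_Icc_self ht), h₀]
    exact mul_sinusoid_zero_pos hω h₁ ht
  · rw [hu_eq hend, sinusoid_add_pi_div hω.ne', h₀, neg_zero]
  · rw [hu'_eq hend, sinusoid_add_pi_div hω.ne']

end SecondOrderODE

section Unilateral

variable {m k kr ω₁ ω₂ t₀ : ℝ} {u : ℝ → ℝ}

noncomputable def unilateralAccel (m k kr x : ℝ) : ℝ :=
  -(k * x + kr * max x 0) / m

theorem lipschitzWith_unilateralAccel (m k kr : ℝ) :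
    ∃ K, LipschitzWith K (unilateralAccel m k kr) := by
  have h : unilateralAccel m k kr = fun x => -(k / m) * x + -(kr / m) * max x 0 := by
    funext x
    simp only [unilateralAccel]
    ring
  have hmax : LipschitzWith _ fun x : ℝ => -(kr / m) * max x 0 :=
    (lipschitzWith_smul (-(kr / m))).comp (LipschitzWith.id.max_const 0)
  exact ⟨_, h ▸ (lipschitzWith_smul (-(k / m))).add hmax⟩

theorem unilateralAccel_of_nonpos (hω : ω₁ ^ 2 = k / m) {x : ℝ} (hx : x ≤ 0) :
    unilateralAccel m k kr x = -ω₁ ^ 2 * x := by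
  rw [unilateralAccel, max_eq_right hx, hω]
  ring

theorem unilateralAccel_of_nonneg (hω : ω₂ ^ 2 = (k + kr) / m) {x : ℝ} (hx : 0 ≤ x) :
    unilateralAccel m k kr x = -ω₂ ^ 2 * x := by
  rw [unilateralAccel, max_eq_left hx, hω]
  ring

theorem hasDerivAt_deriv_of_unilateral (hm : m ≠ 0) (hu' : Differentiable ℝ (deriv u))
    (hode : ∀ t, m * deriv (deriv u) t + k * u t + kr * max (u t) 0 = 0) (t : ℝ) :
    HasDerivAt (deriv u) (unilateralAccel m k kr (u t)) t := by
  refine (hu' t).hasDerivAt.congr_deriv ?_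
  rw [unilateralAccel, eq_div_iff hm]
  linarith [hode t]

theorem eq_zero_of_unilateral (hu : Differentiable ℝ u)
    (hu' : ∀ t, HasDerivAt (deriv u) (unilateralAccel m k kr (u t)) t)
    (h₀ : u t₀ = 0) (h₁ : deriv u t₀ = 0) : u = 0 := by
  obtain ⟨K, hφ⟩ := lipschitzWith_unilateralAccel m k kr
  refine eq_of_second_order_ode hφ (fun t => (hu t).hasDerivAt) hu' (v' := 0)
    (fun t => hasDerivAt_const t 0) (fun t => ?_) h₀ h₁
  simp [unilateralAccel]

theorem periodic_of_unilateral (hu : Differentiable ℝ u)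
    (hu' : ∀ t, HasDerivAt (deriv u) (unilateralAccel m k kr (u t)) t) {T : ℝ}
    (h₀ : u (t₀ + T) = u t₀) (h₁ : deriv u (t₀ + T) = deriv u t₀) : Function.Periodic u T := by
  obtain ⟨K, hφ⟩ := lipschitzWith_unilateralAccel m k kr
  have h := eq_of_second_order_ode hφ (u := fun t => u (t + T)) (u' := fun t => deriv u (t + T))
    (fun t => (hu (t + T)).hasDerivAt.comp_add_const t T)
    (fun t => (hu' (t + T)).comp_add_const t T) (fun t => (hu t).hasDerivAt) hu' h₀ h₁
  exact congrFun h

theorem exists_zero_of_unilateral (hω₁ : 0 < ω₁) (hω₂ : 0 < ω₂) (hω₁k : ω₁ ^ 2 = k / m)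
    (hω₂k : ω₂ ^ 2 = (k + kr) / m) (hu : Differentiable ℝ u)
    (hu' : ∀ t, HasDerivAt (deriv u) (unilateralAccel m k kr (u t)) t) : ∃ t, u t = 0 := by
  by_contra! h
  have hu₁ : ∀ t, HasDerivAt u (deriv u t) t := fun t => (hu t).hasDerivAt
  rcases (h 0).lt_or_gt with hneg | hpos
  · have hneg' : ∀ t, u t < 0 := fun t => by
      by_contra! ht
      obtain ⟨s, hs⟩ := intermediate_value_univ 0 t hu.continuous ⟨hneg.le, ht⟩
      exact h s hs
    obtain ⟨s, hs⟩ := exists_zero_of_harmonic hω₁ hu₁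
      fun t => unilateralAccel_of_nonpos hω₁k (hneg' t).le ▸ hu' t
    exact h s hs
  · have hpos' : ∀ t, 0 < u t := fun t => by
      by_contra! ht
      obtain ⟨s, hs⟩ := intermediate_value_univ t 0 hu.continuous ⟨ht, hpos.le⟩
      exact h s hs
    obtain ⟨s, hs⟩ := exists_zero_of_harmonic hω₂ hu₁
      fun t => unilateralAccel_of_nonneg hω₂k (hpos' t).le ▸ hu' t
    exact h s hs

theorem contact_phase_of_unilateral (hω₂ : 0 < ω₂) (hω₂k : ω₂ ^ 2 = (k + kr) / m)
    (hu : Differentiable ℝ u) (hu' : ∀ t, HasDerivAt (deriv u) (unilateralAccel m k kr (u t)) t)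
    (h₀ : u t₀ = 0) (hc : 0 < deriv u t₀) :
    (∀ t ∈ Ioo t₀ (t₀ + π / ω₂), 0 < u t) ∧ u (t₀ + π / ω₂) = 0 ∧
      deriv u (t₀ + π / ω₂) = -deriv u t₀ := by
  obtain ⟨K, hφ⟩ := lipschitzWith_unilateralAccel m k kr
  obtain ⟨hpos, hend⟩ := half_oscillation_of_second_order_ode hφ hω₂ (fun t => (hu t).hasDerivAt)
    hu' (fun x hx => unilateralAccel_of_nonneg hω₂k (nonneg_of_mul_nonneg_right hx hc)) h₀ hc.ne'
  exact ⟨fun t ht => pos_of_mul_pos_right (hpos t ht) hc.le, hend⟩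

theorem free_phase_of_unilateral (hω₁ : 0 < ω₁) (hω₁k : ω₁ ^ 2 = k / m)
    (hu : Differentiable ℝ u) (hu' : ∀ t, HasDerivAt (deriv u) (unilateralAccel m k kr (u t)) t)
    (h₀ : u t₀ = 0) (hc : deriv u t₀ < 0) :
    (∀ t ∈ Ioo t₀ (t₀ + π / ω₁), u t < 0) ∧ u (t₀ + π / ω₁) = 0 ∧
      deriv u (t₀ + π / ω₁) = -deriv u t₀ := by
  obtain ⟨K, hφ⟩ := lipschitzWith_unilateralAccel m k kr
  obtain ⟨hneg, hend⟩ := half_oscillation_of_second_order_ode hφ hω₁ (fun t => (hu t).hasDerivAt)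
    hu' (fun x hx => unilateralAccel_of_nonpos hω₁k (nonpos_of_mul_nonneg_right hx hc)) h₀ hc.ne
  exact ⟨fun t ht => neg_of_mul_pos_right (hneg t ht) hc.le, hend⟩

theorem exists_zero_deriv_pos_of_unilateral (hω₁ : 0 < ω₁) (hω₂ : 0 < ω₂)
    (hω₁k : ω₁ ^ 2 = k / m) (hω₂k : ω₂ ^ 2 = (k + kr) / m) (hu : Differentiable ℝ u)
    (hu' : ∀ t, HasDerivAt (deriv u) (unilateralAccel m k kr (u t)) t) (hne : u ≠ 0) :
    ∃ t₀, u t₀ = 0 ∧ 0 < deriv u t₀ := by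
  obtain ⟨t, ht⟩ := exists_zero_of_unilateral hω₁ hω₂ hω₁k hω₂k hu hu'
  have hd : deriv u t ≠ 0 := fun hd => hne (eq_zero_of_unilateral hu hu' ht hd)
  rcases hd.lt_or_gt with hneg | hpos
  · obtain ⟨-, hz, hd'⟩ := free_phase_of_unilateral hω₁ hω₁k hu hu' ht hneg
    exact ⟨_, hz, hd' ▸ neg_pos.2 hneg⟩
  · exact ⟨t, ht, hpos⟩

theorem periodic_minimal_of_unilateral (hω₁ : 0 < ω₁) (hω₂ : 0 < ω₂)
    (hω₁k : ω₁ ^ 2 = k / m) (hω₂k : ω₂ ^ 2 = (k + kr) / m) (hu : Differentiable ℝ u)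
    (hu' : ∀ t, HasDerivAt (deriv u) (unilateralAccel m k kr (u t)) t)
    (h₀ : u t₀ = 0) (hc : 0 < deriv u t₀) :
    Function.Periodic u (π / ω₁ + π / ω₂) ∧
      ∀ T, 0 < T → Function.Periodic u T → π / ω₁ + π / ω₂ ≤ T := by
  obtain ⟨hpos, hu₂, hd₂⟩ := contact_phase_of_unilateral hω₂ hω₂k hu hu' h₀ hc
  obtain ⟨hneg, hu₁, hd₁⟩ :=
    free_phase_of_unilateral hω₁ hω₁k hu hu' hu₂ (by rw [hd₂]; linarith)
  have hend : t₀ + π / ω₂ + π / ω₁ = t₀ + (π / ω₁ + π / ω₂) := by ring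
  rw [hend] at hu₁ hd₁
  rw [hd₂, neg_neg] at hd₁
  refine ⟨periodic_of_unilateral hu hu' (hu₁.trans h₀.symm) hd₁, fun T hT hper => ?_⟩
  by_contra! hlt
  have hzero : u (t₀ + T) = 0 := (hper t₀).trans h₀
  have hderiv : deriv u (t₀ + T) = deriv u t₀ := by
    rw [← deriv_comp_add_const, funext hper]
  rcases lt_trichotomy T (π / ω₂) with h | h | h
  · exact (hpos _ ⟨by linarith, by linarith⟩).ne' hzero
  · rw [h, hd₂] at hderiv
    linarith
  · exact (hneg _ ⟨by linarith, by linarith⟩).ne hzero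

end Unilateral

/-- Every nonzero solution of the unilateral spring oscillator
`m·u'' + k·u + k_r·max(u,0) = 0` (with `m, k, k_r > 0`) is periodic with minimal period
`T = π·√(m/k) + π·√(m/(k+k_r))`; the period does not depend on the amplitude of the
solution (the claimed period `T` depends only on `m`, `k`, `k_r`). -/
theorem unilateral_oscillator_periodic_minimal_period
    (m k kr : ℝ) (hm : 0 < m) (hk : 0 < k) (hkr : 0 < kr)
    (u : ℝ → ℝ) (hu : Differentiable ℝ u) (hu' : Differentiable ℝ (deriv u))
    (hode : ∀ t : ℝ, m * deriv (deriv u) t + k * u t + kr * max (u t) 0 = 0)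
    (hne : u ≠ 0) :
    Function.Periodic u (π * Real.sqrt (m / k) + π * Real.sqrt (m / (k + kr))) ∧
      ∀ T' : ℝ, 0 < T' → Function.Periodic u T' →
        π * Real.sqrt (m / k) + π * Real.sqrt (m / (k + kr)) ≤ T' := by
  have hω₁ : 0 < √(k / m) := sqrt_pos.2 (by positivity)
  have hω₂ : 0 < √((k + kr) / m) := sqrt_pos.2 (by positivity)
  have hω₁k : √(k / m) ^ 2 = k / m := sq_sqrt (by positivity)
  have hω₂k : √((k + kr) / m) ^ 2 = (k + kr) / m := sq_sqrt (by positivity)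
  have hperiod : π * √(m / k) + π * √(m / (k + kr)) = π / √(k / m) + π / √((k + kr) / m) := by
    rw [← inv_div k, ← inv_div (k + kr), sqrt_inv, sqrt_inv, ← div_eq_mul_inv, ← div_eq_mul_inv]
  have hacc := hasDerivAt_deriv_of_unilateral hm.ne' hu' hode
  obtain ⟨t₀, h₀, hc⟩ := exists_zero_deriv_pos_of_unilateral hω₁ hω₂ hω₁k hω₂k hu hacc hne
  rw [hperiod]
  exact periodic_minimal_of_unilateral hω₁ hω₂ hω₁k hω₂k hu hacc h₀ hc
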